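/- Let P be a finite set of probability mass functions on a finite set X, all strictly positive, let p ∈ P, N a positive integer, and δ ∈ (0,1). Then with probability at least 1 − δ over an i.i.d. sample D = (X_1,…,X_N) ∼ p^{⊗N}, simultaneously for all p' ∈ P: Σ_{i=1}^N [ −log(p(X_i)/p'(X_i)) + H²(p, p') ] ≤ 2·log(|P|/δ). -/

import Mathlib

open scoped Classical

open Finset Real

/-!
Fix `q ∈ P`. The likelihood ratio `Z = ∏ i √(q(Xᵢ)/p(Xᵢ))` has mean `BC(p,q)^N` under `p^{⊗N}`,
where `BC(p,q) = ∑ₓ √(p x q x) = 1 - H²(p,q)/2 ≤ exp(-H²(p,q)/2)` is the Bhattacharyya coefficient.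
The event that `∑ᵢ -log(p(Xᵢ)/q(Xᵢ)) + N H²(p,q)` exceeds `2 log(|P|/δ)` is the event
`Z > (|P|/δ) exp(-N H²/2)`, so by Markov's inequality it has probability at most `δ/|P|`.
A union bound over `q ∈ P` finishes the proof.
-/

noncomputable def hellingerSq {X : Type*} [Fintype X] (p q : X → ℝ) : ℝ :=
  ∑ x, (√(p x) - √(q x)) ^ 2

noncomputable def bhattacharyyaCoeff {X : Type*} [Fintype X] (p q : X → ℝ) : ℝ :=
  ∑ x, √(p x * q x)

section Hellinger

variable {X : Type*} [Fintype X] {p q : X → ℝ}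

theorem hellingerSq_eq_two_sub_two_mul_bhattacharyyaCoeff (hp : ∀ x, 0 ≤ p x)
    (hq : ∀ x, 0 ≤ q x) (hp1 : ∑ x, p x = 1) (hq1 : ∑ x, q x = 1) :
    hellingerSq p q = 2 - 2 * bhattacharyyaCoeff p q := by
  have hterm : ∀ x, (√(p x) - √(q x)) ^ 2 = p x + q x - 2 * √(p x * q x) := fun x => by
    rw [sub_sq, sq_sqrt (hp x), sq_sqrt (hq x), sqrt_mul (hp x)]
    ring
  simp only [hellingerSq, bhattacharyyaCoeff, hterm, sum_sub_distrib, sum_add_distrib, hp1, hq1,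
    ← mul_sum]
  ring

theorem bhattacharyyaCoeff_le_exp_neg_hellingerSq_div_two (hp : ∀ x, 0 ≤ p x)
    (hq : ∀ x, 0 ≤ q x) (hp1 : ∑ x, p x = 1) (hq1 : ∑ x, q x = 1) :
    bhattacharyyaCoeff p q ≤ exp (-(hellingerSq p q / 2)) := by
  have := add_one_le_exp (-(hellingerSq p q / 2))
  rw [hellingerSq_eq_two_sub_two_mul_bhattacharyyaCoeff hp hq hp1 hq1] at this ⊢
  linarith

end Hellinger

theorem Finset.sum_filter_lt_le_exp_neg_mul_sum_mul_exp {ι : Type*} (s : Finset ι) (w g : ι → ℝ)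
    (a : ℝ) (hw : ∀ x ∈ s, 0 ≤ w x) :
    ∑ x ∈ s with a < g x, w x ≤ exp (-a) * ∑ x ∈ s, w x * exp (g x) := by
  rw [mul_sum]
  calc ∑ x ∈ s with a < g x, w x
      ≤ ∑ x ∈ s with a < g x, exp (-a) * (w x * exp (g x)) := by
        refine sum_le_sum fun x hx => ?_
        obtain ⟨hxs, hax⟩ := mem_filter.1 hx
        have hratio : 1 ≤ exp (-a) * exp (g x) := by
          rw [← exp_add]
          exact one_le_exp (by linarith)
        rw [mul_left_comm]
        exact le_mul_of_one_le_right (hw x hxs) hratio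
    _ ≤ ∑ x ∈ s, exp (-a) * (w x * exp (g x)) :=
        sum_le_sum_of_subset_of_nonneg (filter_subset _ _) fun x hx _ => by
          have := hw x hx
          positivity

theorem Finset.sum_filter_not_forall_le_sum_sum_filter_not {ι κ : Type*} (s : Finset ι)
    (P : Finset κ) (C : κ → ι → Prop) [∀ q, DecidablePred (C q)]
    [DecidablePred fun x => ∀ q ∈ P, C q x] (w : ι → ℝ) (hw : ∀ x ∈ s, 0 ≤ w x) :
    ∑ x ∈ s with ¬ ∀ q ∈ P, C q x, w x ≤ ∑ q ∈ P, ∑ x ∈ s with ¬ C q x, w x := by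
  simp only [sum_filter]
  rw [sum_comm]
  refine sum_le_sum fun x hx => ?_
  have hterm : ∀ q ∈ P, 0 ≤ if ¬ C q x then w x else 0 := fun q _ => by
    split_ifs <;> simp [hw x hx]
  by_cases hgood : ∀ q ∈ P, C q x
  · rw [if_neg (not_not_intro hgood)]
    exact sum_nonneg hterm
  · rw [if_pos hgood]
    push Not at hgood
    obtain ⟨q, hqP, hq⟩ := hgood
    simpa only [if_pos hq] using single_le_sum hterm hqP

theorem sum_prod_mul_exp_sum_eq_pow {X : Type*} [Fintype X] (N : ℕ) (f g : X → ℝ) :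
    ∑ D : Fin N → X, (∏ i, f (D i)) * exp (∑ i, g (D i)) = (∑ x, f x * exp (g x)) ^ N := by
  simp only [exp_sum, ← prod_mul_distrib, Fintype.sum_pow]

theorem mul_exp_neg_log_div_div_two {a b : ℝ} (ha : 0 < a) (hb : 0 < b) :
    a * exp (-log (a / b) / 2) = √(a * b) := by
  rw [sqrt_eq_rpow, rpow_def_of_pos (mul_pos ha hb), log_mul ha.ne' hb.ne',
    log_div ha.ne' hb.ne']
  nth_rewrite 1 [← exp_log ha]
  rw [← exp_add]
  ring_nf

theorem sum_filter_log_likelihood_add_hellingerSq_gt_le {X : Type*} [Fintype X] {p q : X → ℝ}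
    (hp : ∀ x, 0 < p x) (hq : ∀ x, 0 < q x) (hp1 : ∑ x, p x = 1) (hq1 : ∑ x, q x = 1)
    (N : ℕ) {c : ℝ} (hc : 0 < c) :
    ∑ D : Fin N → X with 2 * log c < ∑ i, (-log (p (D i) / q (D i)) + hellingerSq p q),
      ∏ i, p (D i) ≤ c⁻¹ := by
  set H := hellingerSq p q
  have hmoment : ∑ D : Fin N → X, (∏ i, p (D i)) * exp (∑ i, -log (p (D i) / q (D i)) / 2)
      = bhattacharyyaCoeff p q ^ N := by
    rw [sum_prod_mul_exp_sum_eq_pow N p fun x => -log (p x / q x) / 2]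
    simp only [bhattacharyyaCoeff, mul_exp_neg_log_div_div_two (hp _) (hq _)]
  have hBC : bhattacharyyaCoeff p q ^ N ≤ exp (-(N * H / 2)) := by
    calc bhattacharyyaCoeff p q ^ N ≤ exp (-(H / 2)) ^ N :=
          pow_le_pow_left₀ (sum_nonneg fun _ _ => sqrt_nonneg _)
            (bhattacharyyaCoeff_le_exp_neg_hellingerSq_div_two (fun x => (hp x).le)
              (fun x => (hq x).le) hp1 hq1) N
      _ = exp (-(N * H / 2)) := by rw [← exp_nat_mul]; ring_nf
  have hevent : ∀ D : Fin N → X,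
      2 * log c < ∑ i, (-log (p (D i) / q (D i)) + H) ↔
        log c - N * H / 2 < ∑ i, -log (p (D i) / q (D i)) / 2 := fun D => by
    rw [sum_add_distrib, sum_const, card_univ, Fintype.card_fin, nsmul_eq_mul, ← sum_div]
    constructor <;> intro h <;> linarith
  calc ∑ D : Fin N → X with 2 * log c < ∑ i, (-log (p (D i) / q (D i)) + H), ∏ i, p (D i)
      = ∑ D : Fin N → X with log c - N * H / 2 < ∑ i, -log (p (D i) / q (D i)) / 2,
          ∏ i, p (D i) := by
        simp only [hevent]
    _ ≤ exp (-(log c - N * H / 2)) * bhattacharyyaCoeff p q ^ N := by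
        rw [← hmoment]
        exact sum_filter_lt_le_exp_neg_mul_sum_mul_exp _ _ _ _
          fun D _ => prod_nonneg fun i _ => (hp _).le
    _ ≤ exp (-(log c - N * H / 2)) * exp (-(N * H / 2)) := by gcongr
    _ = c⁻¹ := by rw [← exp_add, ← exp_log (inv_pos.2 hc), log_inv]; ring_nf

theorem uniform_likelihood_hellinger_bound_general
    {X : Type*} [Fintype X] (P : Finset (X → ℝ)) (p : X → ℝ) (hpP : p ∈ P)
    (N : ℕ) (δ : ℝ) (hδ0 : 0 < δ)
    (hpos : ∀ q ∈ P, ∀ x, 0 < q x) (hsum : ∀ q ∈ P, ∑ x, q x = 1) :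
    1 - δ ≤ ∑ D ∈ Finset.univ.filter (fun D : Fin N → X =>
        ∀ p' ∈ P,
          ∑ i, (-Real.log (p (D i) / p' (D i))
                + ∑ x, (Real.sqrt (p x) - Real.sqrt (p' x)) ^ 2)
            ≤ 2 * Real.log (P.card / δ)),
      ∏ i, p (D i) := by
  have hK : 0 < (P.card : ℝ) := by exact_mod_cast card_pos.2 ⟨p, hpP⟩
  have hmass : ∑ D : Fin N → X, ∏ i, p (D i) = 1 := by
    rw [← Fintype.sum_pow, hsum p hpP, one_pow]
  have htail : ∀ q ∈ P, ∑ D : Fin N → X with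
      ¬ ∑ i, (-log (p (D i) / q (D i)) + hellingerSq p q) ≤ 2 * log (P.card / δ),
      ∏ i, p (D i) ≤ δ / P.card := fun q hq => by
    simpa only [not_le, inv_div] using sum_filter_log_likelihood_add_hellingerSq_gt_le
      (hpos p hpP) (hpos q hq) (hsum p hpP) (hsum q hq) N (div_pos hK hδ0)
  have hbad := (sum_filter_not_forall_le_sum_sum_filter_not _ P _ _
    fun D _ => prod_nonneg fun i _ => (hpos p hpP _).le).trans (sum_le_sum htail)
  rw [sum_const, nsmul_eq_mul, mul_div_cancel₀ _ hK.ne'] at hbad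
  rw [← sum_filter_add_sum_filter_not _ (fun D : Fin N → X => ∀ q ∈ P,
    ∑ i, (-log (p (D i) / q (D i)) + hellingerSq p q) ≤ 2 * log (P.card / δ))] at hmass
  change 1 - δ ≤ ∑ D : Fin N → X with ∀ q ∈ P,
    ∑ i, (-log (p (D i) / q (D i)) + hellingerSq p q) ≤ 2 * log (P.card / δ), ∏ i, p (D i)
  linarith

theorem uniform_likelihood_hellinger_bound
    {X : Type*} [Fintype X] (P : Finset (X → ℝ)) (p : X → ℝ) (hpP : p ∈ P)
    (N : ℕ) (hN : 0 < N) (δ : ℝ) (hδ0 : 0 < δ) (hδ1 : δ < 1)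
    (hpos : ∀ q ∈ P, ∀ x, 0 < q x) (hsum : ∀ q ∈ P, ∑ x, q x = 1) :
    1 - δ ≤ ∑ D ∈ Finset.univ.filter (fun D : Fin N → X =>
        ∀ p' ∈ P,
          ∑ i, (-Real.log (p (D i) / p' (D i))
                + ∑ x, (Real.sqrt (p x) - Real.sqrt (p' x)) ^ 2)
            ≤ 2 * Real.log (P.card / δ)),
      ∏ i, p (D i) :=
  uniform_likelihood_hellinger_bound_general P p hpP N δ hδ0 hpos hsum
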